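/- Let G=(V,E) be a finite connected simple graph with radius R(G) ≥ 1, let c ∈ C(G), let y ∈ V satisfy d_G(c,y) = R(G), and let γ = c a₁ … a_{R(G)−1} y be a shortest path from c to y. If there is no vertex z ≠ y such that every shortest path μ from c to z satisfies γ ∩ μ = {c} and R(G) − 1 ≤ d_G(c,z), then the eccentricity of a₁ in G is at most R(G) − 1 (contradicting the minimality of R(G)); consequently some such z always exists. -/

import Mathlib

open SimpleGraph

noncomputable def eccentr {V : Type} (G : SimpleGraph V) (x : V) : ℕ :=
  sSup (Set.range (G.dist x))

noncomputable def grRadius {V : Type} (G : SimpleGraph V) : ℕ :=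
  sInf (Set.range (eccentr G))

def ncontract {V : Type} (G : SimpleGraph V) (x : V) :
    SimpleGraph {v : V // ¬ G.Adj x v} where
  Adj a b := G.Adj a.1 b.1 ∨
    (a.1 = x ∧ b.1 ≠ x ∧ ∃ y, G.Adj x y ∧ G.Adj y b.1) ∨
    (b.1 = x ∧ a.1 ≠ x ∧ ∃ y, G.Adj x y ∧ G.Adj y a.1)
  symm := ⟨fun a b h => by
    rcases h with h | h | h
    · exact Or.inl h.symm
    · exact Or.inr (Or.inr h)
    · exact Or.inr (Or.inl h)⟩
  loopless := ⟨fun a h => by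
    rcases h with h | ⟨h1, h2, -⟩ | ⟨h1, h2, -⟩
    · exact G.loopless.irrefl _ h
    · exact h2 h1
    · exact h2 h1⟩

/-! Let `a₁ = γ.getVert 1`. The vertex `y` lies at distance `R - 1` from `a₁` along `γ`, and a vertex
`w` with `d(c, w) < R - 1` is within `R - 1` of `a₁` through `c`. Any other `w` has, by assumption,
a geodesic `μ` from `c` meeting the geodesic `γ` in some `v ≠ c`; then `a₁` precedes `v` on a geodesic
from `c` through `v` to `w`, so `d(a₁, w) < d(c, w) ≤ R`. Hence `a₁` has eccentricity at most `R - 1`,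
which contradicts the minimality of `R` as soon as `R ≥ 1`. -/

namespace SimpleGraph

variable {V : Type*} {G : SimpleGraph V} {u v w : V}

lemma Walk.dist_getVert_le (p : G.Walk u v) {i j : ℕ} (hij : i ≤ j) :
    G.dist (p.getVert i) (p.getVert j) ≤ j - i :=
  calc G.dist (p.getVert i) (p.getVert j)
      = G.dist (p.getVert i) ((p.drop i).getVert (j - i)) := by
        rw [drop_getVert, Nat.add_sub_cancel' hij]
    _ ≤ ((p.drop i).take (j - i)).length := dist_le _
    _ ≤ j - i := by rw [take_length]; exact min_le_left _ _

lemma Walk.dist_getVert_of_length_eq_dist (p : G.Walk u v) (hp : p.length = G.dist u v)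
    {i : ℕ} (hi : i ≤ p.length) : G.dist u (p.getVert i) = i := by
  have hle : G.dist u (p.getVert i) ≤ i := by
    simpa using p.dist_getVert_le (Nat.zero_le i)
  have hrest : G.dist (p.getVert i) v ≤ p.length - i := by
    simpa using p.dist_getVert_le hi
  have htri : G.dist u v ≤ G.dist u (p.getVert i) + G.dist (p.getVert i) v :=
    (p.drop i).reachable.dist_triangle_right u
  omega

lemma Walk.dist_getVert_one_lt_of_mem_support {c y : V} (γ : G.Walk c y)
    (hγ : γ.length = G.dist c y) (μ : G.Walk c w) (hμ : μ.length = G.dist c w)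
    (hvγ : v ∈ γ.support) (hvμ : v ∈ μ.support) (hvc : v ≠ c) :
    G.dist (γ.getVert 1) w < G.dist c w := by
  obtain ⟨i, rfl, hi⟩ := mem_support_iff_exists_getVert.mp hvγ
  obtain ⟨j, hj, hjμ⟩ := mem_support_iff_exists_getVert.mp hvμ
  have hi0 : i ≠ 0 := by rintro rfl; exact hvc γ.getVert_zero
  have hci : G.dist c (γ.getVert i) = i := γ.dist_getVert_of_length_eq_dist hγ hi
  have hcj : G.dist c (γ.getVert i) ≤ j := by
    simpa [hj] using μ.dist_getVert_le (Nat.zero_le j)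
  have hjw : G.dist (γ.getVert i) w ≤ μ.length - j := by
    simpa [hj] using μ.dist_getVert_le hjμ
  calc G.dist (γ.getVert 1) w
      ≤ G.dist (γ.getVert 1) (γ.getVert i) + G.dist (γ.getVert i) w :=
        by classical exact (μ.dropUntil _ hvμ).reachable.dist_triangle_right _
    _ ≤ (i - 1) + (μ.length - j) := add_le_add (γ.dist_getVert_le (by omega)) hjw
    _ < G.dist c w := by omega

lemma Walk.dist_getVert_one_le_of_forall_meets {c y : V} {n : ℕ} (hc : ∀ w, G.dist c w ≤ n)
    (hy : G.dist c y = n) (γ : G.Walk c y) (hγ : γ.length = n)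
    (hmeet : ∀ w ≠ y, n - 1 ≤ G.dist c w → ∃ μ : G.Walk c w, μ.length = G.dist c w ∧
      ∃ v ∈ γ.support, v ∈ μ.support ∧ v ≠ c)
    (w : V) : G.dist (γ.getVert 1) w ≤ n - 1 := by
  by_cases hwy : w = y
  · subst hwy
    rcases Nat.eq_zero_or_pos γ.length with hnil | hpos
    · simp [γ.getVert_of_length_le (hnil ▸ Nat.zero_le 1)]
    · have := γ.dist_getVert_le hpos
      rwa [γ.getVert_length, hγ] at this
  by_cases hfar : n - 1 ≤ G.dist c w
  · obtain ⟨μ, hμ, v, hvγ, hvμ, hvc⟩ := hmeet w hwy hfar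
    have hcloser := γ.dist_getVert_one_lt_of_mem_support (hγ.trans hy.symm) μ hμ hvγ hvμ hvc
    have hcw := hc w
    omega
  · have hstep : G.dist (γ.getVert 1) c ≤ 1 := by
      simpa [dist_comm] using γ.dist_getVert_le (Nat.zero_le 1)
    have htri := (γ.take 1).reachable.symm.dist_triangle_left w
    omega

end SimpleGraph

section Eccentricity

variable {V : Type} {G : SimpleGraph V}

lemma dist_le_eccentr [Finite V] (x w : V) : G.dist x w ≤ eccentr G x :=
  le_csSup (Set.finite_range _).bddAbove ⟨w, rfl⟩

lemma eccentr_le {x : V} {n : ℕ} (h : ∀ w, G.dist x w ≤ n) : eccentr G x ≤ n :=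
  csSup_le ⟨G.dist x x, x, rfl⟩ (by rintro _ ⟨w, rfl⟩; exact h w)

lemma grRadius_le_eccentr (x : V) : grRadius G ≤ eccentr G x :=
  Nat.sInf_le ⟨x, rfl⟩

end Eccentricity

theorem stmt_14_general {V : Type} [Fintype V] (G : SimpleGraph V)
    (hR : 1 ≤ grRadius G) (c y : V) (hc : eccentr G c = grRadius G)
    (hy : G.dist c y = grRadius G) (γ : G.Walk c y)
    (hγl : γ.length = grRadius G) :
    ((¬ ∃ z : V, z ≠ y ∧
        (∀ μ : G.Walk c z, μ.IsPath → μ.length = G.dist c z →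
          ∀ v ∈ γ.support, v ∈ μ.support → v = c) ∧
        grRadius G - 1 ≤ G.dist c z) →
      eccentr G (γ.getVert 1) ≤ grRadius G - 1) ∧
    ∃ z : V, z ≠ y ∧
      (∀ μ : G.Walk c z, μ.IsPath → μ.length = G.dist c z →
        ∀ v ∈ γ.support, v ∈ μ.support → v = c) ∧
      grRadius G - 1 ≤ G.dist c z := by
  have hlt : ¬ eccentr G (γ.getVert 1) ≤ grRadius G - 1 := by
    have := grRadius_le_eccentr (G := G) (γ.getVert 1)
    omega
  refine (fun hecc => ⟨hecc, not_not.mp (mt hecc hlt)⟩) fun hnone => eccentr_le <|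
    γ.dist_getVert_one_le_of_forall_meets (fun w => hc ▸ dist_le_eccentr c w) hy hγl
      fun w hwy hfar => ?_
  by_contra! hdisjoint
  exact hnone ⟨w, hwy, fun μ _ hμ => hdisjoint μ hμ, hfar⟩

theorem stmt_14 {V : Type} [Fintype V] (G : SimpleGraph V) (hconn : G.Connected)
    (hR : 1 ≤ grRadius G) (c y : V) (hc : eccentr G c = grRadius G)
    (hy : G.dist c y = grRadius G) (γ : G.Walk c y) (hγp : γ.IsPath)
    (hγl : γ.length = grRadius G) :
    ((¬ ∃ z : V, z ≠ y ∧
        (∀ μ : G.Walk c z, μ.IsPath → μ.length = G.dist c z →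
          ∀ v ∈ γ.support, v ∈ μ.support → v = c) ∧
        grRadius G - 1 ≤ G.dist c z) →
      eccentr G (γ.getVert 1) ≤ grRadius G - 1) ∧
    ∃ z : V, z ≠ y ∧
      (∀ μ : G.Walk c z, μ.IsPath → μ.length = G.dist c z →
        ∀ v ∈ γ.support, v ∈ μ.support → v = c) ∧
      grRadius G - 1 ≤ G.dist c z :=
  stmt_14_general G hR c y hc hy γ hγl
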